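/- Let S₁, S₂ be set-strings of equal length m over a finite alphabet Σ. If the multiset offset representations agree at every position (Ŝ₁[i] = Ŝ₂[i] for all i), then for every position s and every finite set O of natural numbers, N_{S₁}(s, O) = N_{S₂}(s, O). -/
import Mathlib


/-- The occurrence set of character `σ` in the set-string `S`. -/
def Occ {Γ : Type*} [DecidableEq Γ] {m : ℕ} (S : Fin m → Finset Γ) (σ : Γ) :
    Finset (Fin m) :=
  Finset.univ.filter fun i => σ ∈ S i

/-- The offset set of character `σ` in the set-string `S`: the set of distances from
its first occurrence to each of its occurrences; `∅` if `σ` never occurs. -/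
def OffSet {Γ : Type*} [DecidableEq Γ] {m : ℕ} (S : Fin m → Finset Γ) (σ : Γ) :
    Finset ℕ :=
  if h : (Occ S σ).Nonempty then
    (Occ S σ).image fun i : Fin m => (i : ℕ) - (((Occ S σ).min' h : Fin m) : ℕ)
  else ∅

/-- The multiset offset representation of `S` at position `i`: the multiset of the
offset sets of the characters in `S i` (one element per character). -/
def offsetRep {Γ : Type*} [DecidableEq Γ] {m : ℕ} (S : Fin m → Finset Γ) (i : Fin m) :
    Multiset (Finset ℕ) :=
  (S i).val.map fun σ => OffSet S σ

/-- `NStart S s O` is the number of characters whose first occurrence in `S` is at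
position `s` and whose offset set is `O`. -/
def NStart {Γ : Type*} [Fintype Γ] [DecidableEq Γ] {m : ℕ} (S : Fin m → Finset Γ)
    (s : ℕ) (O : Finset ℕ) : ℕ :=
  if h : s < m then
    (Finset.univ.filter fun σ =>
      σ ∈ S ⟨s, h⟩ ∧ (∀ j, σ ∈ S j → s ≤ (j : ℕ)) ∧ OffSet S σ = O).card
  else 0

section Aux
variable {Γ : Type*} [DecidableEq Γ] {m : ℕ} (S : Fin m → Finset Γ)

lemma mem_Occ {σ : Γ} {i : Fin m} : i ∈ Occ S σ ↔ σ ∈ S i := by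
  simp [Occ]

lemma zero_mem_OffSet {σ : Γ} (h : (Occ S σ).Nonempty) : 0 ∈ OffSet S σ := by
  rw [OffSet, dif_pos h]
  exact Finset.mem_image.2 ⟨(Occ S σ).min' h, (Occ S σ).min'_mem h, Nat.sub_self _⟩

lemma mem_OffSet_iff {σ : Γ} (h : (Occ S σ).Nonempty) {o : ℕ} :
    o ∈ OffSet S σ ↔ ∃ i ∈ Occ S σ, (i : ℕ) = (((Occ S σ).min' h : Fin m) : ℕ) + o := by
  rw [OffSet, dif_pos h, Finset.mem_image]
  constructor
  · rintro ⟨i, hi, rfl⟩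
    have := Fin.le_iff_val_le_val.1 ((Occ S σ).min'_le i hi)
    exact ⟨i, hi, by omega⟩
  · rintro ⟨i, hi, hio⟩
    exact ⟨i, hi, by omega⟩

lemma min'_eq {σ : Γ} {p : Fin m} (hp : σ ∈ S p) (hmin : ∀ j, σ ∈ S j → (p : ℕ) ≤ j) :
    (Occ S σ).min' ⟨p, (mem_Occ S).2 hp⟩ = p := by
  refine le_antisymm (Finset.min'_le _ _ ((mem_Occ S).2 hp)) ?_
  exact Finset.le_min' _ _ _ fun j hj => Fin.le_iff_val_le_val.2 (hmin j ((mem_Occ S).1 hj))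

lemma NStart_of_zero_notMem [Fintype Γ] {s : ℕ} {O : Finset ℕ} (h0 : 0 ∉ O) :
    NStart S s O = 0 := by
  rw [NStart]
  split
  · rename_i hs
    rw [Finset.card_eq_zero, Finset.eq_empty_iff_forall_notMem]
    intro σ hσ
    simp only [Finset.mem_filter, Finset.mem_univ, true_and] at hσ
    obtain ⟨hmem, -, hO⟩ := hσ
    exact h0 (hO ▸ zero_mem_OffSet S ⟨⟨s, hs⟩, (mem_Occ S).2 hmem⟩)
  · rfl

variable [Fintype Γ]

lemma count_offsetRep (i : Fin m) (O : Finset ℕ) :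
    (offsetRep S i).count O = (Finset.univ.filter fun σ => σ ∈ S i ∧ OffSet S σ = O).card := by
  rw [offsetRep, Multiset.count_map]
  have h1 : Multiset.card ((S i).val.filter fun σ => O = OffSet S σ)
      = ((S i).filter fun σ => O = OffSet S σ).card := rfl
  rw [h1]
  congr 1
  ext σ
  simp only [Finset.mem_filter, Finset.mem_univ, true_and]
  tauto

lemma card_decomp {s : ℕ} (hs : s < m) (O : Finset ℕ) :
    (Finset.univ.filter fun σ => σ ∈ S ⟨s, hs⟩ ∧ OffSet S σ = O).card
      = ∑ o ∈ O.filter (· ≤ s), NStart S (s - o) O := by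
  classical
  set A := Finset.univ.filter fun σ => σ ∈ S ⟨s, hs⟩ ∧ OffSet S σ = O with hA
  set g : Γ → ℕ := fun σ =>
    if h : (Occ S σ).Nonempty then s - (((Occ S σ).min' h : Fin m) : ℕ) else 0 with hg
  have hmaps : ∀ σ ∈ A, g σ ∈ O.filter (· ≤ s) := by
    intro σ hσ
    simp only [hA, Finset.mem_filter, Finset.mem_univ, true_and] at hσ
    obtain ⟨hmem, hO⟩ := hσ
    have hne : (Occ S σ).Nonempty := ⟨⟨s, hs⟩, (mem_Occ S).2 hmem⟩
    have hmin_le : (((Occ S σ).min' hne : Fin m) : ℕ) ≤ s :=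
      Fin.le_iff_val_le_val.1 ((Occ S σ).min'_le _ ((mem_Occ S).2 hmem))
    have : g σ ∈ OffSet S σ := by
      rw [hg]
      simp only [dif_pos hne]
      rw [mem_OffSet_iff S hne]
      exact ⟨⟨s, hs⟩, (mem_Occ S).2 hmem, by simp only [Fin.val_mk]; omega⟩
    rw [hO] at this
    refine Finset.mem_filter.2 ⟨this, ?_⟩
    simp only [hg, dif_pos hne]
    omega
  rw [Finset.card_eq_sum_card_fiberwise hmaps]
  refine Finset.sum_congr rfl fun o ho => ?_
  have hoO : o ∈ O := (Finset.mem_filter.1 ho).1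
  have hos : o ≤ s := by simpa using (Finset.mem_filter.1 ho).2
  have hsm : s - o < m := lt_of_le_of_lt (Nat.sub_le s o) hs
  rw [NStart, dif_pos hsm]
  congr 1
  ext σ
  simp only [hA, Finset.mem_filter, Finset.mem_univ, true_and, and_assoc]
  constructor
  · rintro ⟨hmem, hO, hgσ⟩
    have hne : (Occ S σ).Nonempty := ⟨⟨s, hs⟩, (mem_Occ S).2 hmem⟩
    have hmin_le : (((Occ S σ).min' hne : Fin m) : ℕ) ≤ s :=
      Fin.le_iff_val_le_val.1 ((Occ S σ).min'_le _ ((mem_Occ S).2 hmem))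
    rw [hg] at hgσ
    simp only [dif_pos hne] at hgσ
    have hmin_val : (((Occ S σ).min' hne : Fin m) : ℕ) = s - o := by omega
    have hmem' : σ ∈ S ⟨s - o, hsm⟩ := by
      have := (mem_Occ S).1 ((Occ S σ).min'_mem hne)
      have heq : ((Occ S σ).min' hne : Fin m) = ⟨s - o, hsm⟩ := Fin.ext hmin_val
      rwa [heq] at this
    refine ⟨hmem', fun j hj => ?_, hO⟩
    have := Fin.le_iff_val_le_val.1 ((Occ S σ).min'_le j ((mem_Occ S).2 hj))
    omega
  · rintro ⟨hmem, hfirst, hO⟩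
    have hne : (Occ S σ).Nonempty := ⟨⟨s - o, hsm⟩, (mem_Occ S).2 hmem⟩
    have hmin : ((Occ S σ).min' hne : Fin m) = ⟨s - o, hsm⟩ := min'_eq S hmem hfirst
    have hoO' : o ∈ OffSet S σ := hO ▸ hoO
    rw [mem_OffSet_iff S hne] at hoO'
    obtain ⟨i, hi, hival⟩ := hoO'
    rw [hmin] at hival
    simp only at hival
    have hival' : (i : ℕ) = s := by omega
    have hmemS : σ ∈ S ⟨s, hs⟩ := by
      have := (mem_Occ S).1 hi
      have heq : i = ⟨s, hs⟩ := Fin.ext hival'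
      rwa [heq] at this
    refine ⟨hmemS, hO, ?_⟩
    rw [hg]
    simp only [dif_pos hne, hmin]
    omega

end Aux

/-- If the multiset offset representations of two equal-length set-strings agree at
every position, then for every start position and every offset set, the number of
characters with that start position and offset set is the same in both. -/
theorem NStart_eq_of_offsetRep_eq {Γ : Type*} [Fintype Γ] [DecidableEq Γ]
    {m : ℕ} (S₁ S₂ : Fin m → Finset Γ)
    (h : ∀ i, offsetRep S₁ i = offsetRep S₂ i) :
    ∀ (s : ℕ) (O : Finset ℕ), NStart S₁ s O = NStart S₂ s O := by
  intro s
  induction s using Nat.strong_induction_on with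
  | _ s ih =>
    intro O
    by_cases hs : s < m
    · by_cases h0 : 0 ∈ O
      · have key : ∀ S : Fin m → Finset Γ,
            NStart S s O + ∑ o ∈ (O.filter (· ≤ s)).erase 0, NStart S (s - o) O
              = (offsetRep S ⟨s, hs⟩).count O := by
          intro S
          rw [count_offsetRep, card_decomp S hs O]
          have h0' : (0 : ℕ) ∈ O.filter (· ≤ s) := Finset.mem_filter.2 ⟨h0, by simp⟩
          rw [← Finset.add_sum_erase _ _ h0']
          simp
        have h1 := key S₁
        have h2 := key S₂
        rw [h ⟨s, hs⟩] at h1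
        have hsum : ∑ o ∈ (O.filter (· ≤ s)).erase 0, NStart S₁ (s - o) O
            = ∑ o ∈ (O.filter (· ≤ s)).erase 0, NStart S₂ (s - o) O := by
          refine Finset.sum_congr rfl fun o ho => ?_
          have ho' := Finset.mem_erase.1 ho
          have hos : o ≤ s := by
            have := Finset.mem_filter.1 ho'.2
            simpa using this.2
          exact ih (s - o) (by omega) O
        omega
      · rw [NStart_of_zero_notMem S₁ h0, NStart_of_zero_notMem S₂ h0]
    · rw [NStart, dif_neg hs, NStart, dif_neg hs]
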